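/- Let P₀ be a finite poset with elements x₁,…,x_{m₀}, and S ⊆ |P₀| a chain in P₀. Fix nonnegative values mᵢ for all i with xᵢ ∉ S, and let f be the polynomial in the card(S) variables mᵢ (xᵢ ∈ S) that gives L₊(P₀; m₁,…,m_{m₀}) as a function of those variables. Then the total degree of f equals the sum of the values mᵢ over those xᵢ ∉ S that are incomparable in P₀ with at least one element of S. -/

import Mathlib

open scoped Classical

/-- Underlying set of the lexicographic sum over `Fin m₀` of chains `C i` of `m i` elements. -/
abbrev LexSumChains (m₀ : ℕ) (m : Fin m₀ → ℕ) : Type := Σ i : Fin m₀, Fin (m i)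

/-- The order of the lexicographic sum `P₀ * (C₁, …, C_{m₀})` of chains over the poset
`(Fin m₀, r0)`: within a chain elements keep their order, and an element of `C i` is below an
element of `C i'` (for `i ≠ i'`) iff `xᵢ ≺₀ x_{i'}`. -/
def lexRel {m₀ : ℕ} (r0 : Fin m₀ → Fin m₀ → Prop) (m : Fin m₀ → ℕ)
    (x y : LexSumChains m₀ m) : Prop :=
  (x.1 = y.1 ∧ (x.2 : ℕ) ≤ (y.2 : ℕ)) ∨ (x.1 ≠ y.1 ∧ r0 x.1 y.1)

/-- `φ` is (the isotone bijection corresponding to) a linearization of the lexicographic sum. -/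
def IsLin {m₀ : ℕ} (r0 : Fin m₀ → Fin m₀ → Prop) (m : Fin m₀ → ℕ)
    (φ : LexSumChains m₀ m ≃ Fin (∑ i, m i)) : Prop :=
  ∀ x y, lexRel r0 m x y → φ x ≤ φ y

/-- `b` is the reference ordering, listing the elements `x_{i,j}` in lexicographic order
of the pairs `(i,j)`. -/
def IsRef {m₀ : ℕ} (m : Fin m₀ → ℕ) (b : LexSumChains m₀ m ≃ Fin (∑ i, m i)) : Prop :=
  ∀ x y : LexSumChains m₀ m,
    (x.1 < y.1 ∨ (x.1 = y.1 ∧ (x.2 : ℕ) ≤ (y.2 : ℕ))) → b x ≤ b y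

/-- `L₊(P₀; m₁, …, m_{m₀})`, the number of linearizations of the lexicographic sum of chains. -/
noncomputable def Lplus (m₀ : ℕ) (r0 : Fin m₀ → Fin m₀ → Prop) (m : Fin m₀ → ℕ) : ℕ :=
  Nat.card {φ : LexSumChains m₀ m ≃ Fin (∑ i, m i) // IsLin r0 m φ}

/-- `L₋(P₀; m₁, …, m_{m₀})`, the sign-imbalance (number of even minus number of odd
linearizations) relative to the reference ordering `b`. -/
noncomputable def Lminus (m₀ : ℕ) (r0 : Fin m₀ → Fin m₀ → Prop) (m : Fin m₀ → ℕ)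
    (b : LexSumChains m₀ m ≃ Fin (∑ i, m i)) : ℤ :=
  ∑ φ : LexSumChains m₀ m ≃ Fin (∑ i, m i),
    if IsLin r0 m φ then ((Equiv.Perm.sign (b.symm.trans φ)) : ℤ) else 0

/-!
Write `d` for the sum of the `mᵢ` over the indices `i ∉ S` incomparable with some element of `S`,
and `N` for the total size. A linearization is determined by the positions of the `d` elements
of these chains together with the relative order of the elements of the chains that are neither
in `S` nor counted in `d`: every element of a chain of `S` is comparable with all the remaining
elements. Hence `L₊ = O(N ^ d)`. Conversely, when every chain of `S` has `N` elements, each chain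
counted in `d` can be inserted into the chain of the greatest element of `S` incomparable with it,
each of its elements at any of `N / d` slots, so `L₊ ≥ (N / d) ^ d`. Restricting `f` to the lines
`t ↦ t • a` through natural points, the first bound kills every homogeneous component of degree
`> d`, and the second gives the diagonal restriction degree at least `d`.
-/

open Finset Filter Asymptotics

section Rank

variable {γ K : Type*} [Fintype γ] [LinearOrder K]

noncomputable def rankEquiv (κ : γ → K) (hκ : Function.Injective κ) {n : ℕ}
    (h : Fintype.card γ = n) : γ ≃ Fin n :=
  letI := LinearOrder.lift' κ hκ
  (Fintype.orderIsoFinOfCardEq γ h).symm.toEquiv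

variable {κ : γ → K} (hκ : Function.Injective κ) {n : ℕ} (h : Fintype.card γ = n) {x y : γ}

theorem rankEquiv_lt_rankEquiv_iff : rankEquiv κ hκ h x < rankEquiv κ hκ h y ↔ κ x < κ y :=
  letI := LinearOrder.lift' κ hκ
  (Fintype.orderIsoFinOfCardEq γ h).symm.lt_iff_lt

theorem rankEquiv_le_rankEquiv_iff : rankEquiv κ hκ h x ≤ rankEquiv κ hκ h y ↔ κ x ≤ κ y :=
  letI := LinearOrder.lift' κ hκ
  (Fintype.orderIsoFinOfCardEq γ h).symm.le_iff_le

end Rank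

theorem Equiv.Perm.eq_one_of_strictMonoOn {n : ℕ} {ρ : Equiv.Perm (Fin n)} {P : Finset (Fin n)}
    (hfix : ∀ a ∉ P, ρ a = a) (hmono : StrictMonoOn ρ P) : ρ = 1 := by
  have hmaps : ∀ a ∈ P, ρ a ∈ P := fun a ha => by
    by_contra h
    exact h (by rwa [ρ.injective (hfix _ h)])
  have hunique := Finset.orderEmbOfFin_unique (s := P) rfl
    (f := ρ ∘ P.orderEmbOfFin rfl) (fun i => hmaps _ (P.orderEmbOfFin_mem rfl i))
    fun i j hij => hmono (P.orderEmbOfFin_mem rfl i) (P.orderEmbOfFin_mem rfl j)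
      ((P.orderEmbOfFin rfl).strictMono hij)
  ext a
  by_cases ha : a ∈ P
  · obtain ⟨i, rfl⟩ : a ∈ Set.range (P.orderEmbOfFin rfl) := by simpa using ha
    exact congrArg Fin.val (congrFun hunique i)
  · exact congrArg Fin.val (hfix a ha)

theorem Equiv.eq_of_eqOn_compl_of_lt_imp {α : Type*} {n : ℕ} {φ ψ : α ≃ Fin n} (K : Set α)
    (hout : Set.EqOn φ ψ Kᶜ) (hin : ∀ x ∈ K, ∀ y ∈ K, φ x < φ y → ψ x < ψ y) : φ = ψ := by
  have hρ : φ.symm.trans ψ = 1 := by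
    refine Equiv.Perm.eq_one_of_strictMonoOn (P := univ.filter fun a => φ.symm a ∈ K)
      (fun a ha => ?_) fun a ha b hb hab => ?_
    · exact (hout (by simpa using ha)).symm.trans (φ.apply_symm_apply a)
    · simp only [coe_filter, mem_univ, true_and] at ha hb
      simpa using hin _ ha _ hb (by simpa using hab)
  ext x
  simpa using (congrArg (fun ρ : Equiv.Perm (Fin n) => (ρ (φ x) : ℕ)) hρ).symm

theorem Rat.norm_natCast (n : ℕ) : ‖(n : ℚ)‖ = n := by
  rw [← Rat.norm_cast_real]
  simp

namespace Polynomial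

variable {𝕜 : Type*} [NormedField 𝕜] [LinearOrder 𝕜] [IsStrictOrderedRing 𝕜] [OrderTopology 𝕜]
  [Archimedean 𝕜]

theorem not_isBigO_natCast_of_degree_lt {P Q : 𝕜[X]} (h : P.degree < Q.degree) :
    ¬ (fun n : ℕ => Q.eval (n : 𝕜)) =O[atTop] fun n : ℕ => P.eval (n : 𝕜) := by
  intro hQP
  have hQ : Q ≠ 0 := by rintro rfl; simp at h
  have hPQ := (isLittleO_atTop_of_degree_lt P Q h).comp_tendsto tendsto_natCast_atTop_atTop
  refine isLittleO_irrefl ?_ (hQP.trans_isLittleO hPQ)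
  exact (tendsto_natCast_atTop_atTop.eventually (eventually_atTop_not_isRoot Q hQ)).frequently

theorem natDegree_le_of_isBigO {P : 𝕜[X]} {d : ℕ}
    (h : (fun n : ℕ => P.eval (n : 𝕜)) =O[atTop] fun n : ℕ => (n : 𝕜) ^ d) : P.natDegree ≤ d := by
  by_contra! hd
  refine not_isBigO_natCast_of_degree_lt (P := X ^ d) ?_ (by simpa using h)
  exact degree_lt_degree (by rwa [natDegree_X_pow])

theorem le_natDegree_of_isBigO {P : 𝕜[X]} {d : ℕ}
    (h : (fun n : ℕ => (n : 𝕜) ^ d) =O[atTop] fun n : ℕ => P.eval (n : 𝕜)) : d ≤ P.natDegree := by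
  by_contra! hd
  refine not_isBigO_natCast_of_degree_lt (Q := X ^ d) ?_ (by simpa using h)
  exact degree_lt_degree (by rwa [natDegree_X_pow])

end Polynomial

namespace MvPolynomial

variable {σ R : Type*} [CommSemiring R]

noncomputable def restrictLine (a : σ → R) : MvPolynomial σ R →ₐ[R] Polynomial R :=
  aeval fun i => Polynomial.C (a i) * Polynomial.X

theorem eval_restrictLine (a : σ → R) (f : MvPolynomial σ R) (t : R) :
    (restrictLine a f).eval t = eval (fun i => a i * t) f := by
  rw [← Polynomial.coe_aeval_eq_eval, restrictLine, ← AlgHom.comp_apply, comp_aeval]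
  simp

theorem restrictLine_monomial (a : σ → R) (s : σ →₀ ℕ) (c : R) :
    restrictLine a (monomial s c) =
      Polynomial.C (eval a (monomial s c)) * Polynomial.X ^ s.degree := by
  simp [restrictLine, aeval_monomial, eval_monomial, Finsupp.prod, mul_pow, prod_mul_distrib,
    prod_pow_eq_pow_sum, Finsupp.degree_apply, Polynomial.algebraMap_eq, mul_assoc]

theorem coeff_restrictLine (a : σ → R) (f : MvPolynomial σ R) (k : ℕ) :
    (restrictLine a f).coeff k = eval a (homogeneousComponent k f) := by
  induction f using MvPolynomial.induction_on' with
  | monomial s c =>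
    rw [restrictLine_monomial, Polynomial.coeff_C_mul_X_pow,
      homogeneousComponent_of_mem (isHomogeneous_monomial c rfl)]
    split_ifs <;> simp
  | add p q hp hq => simp [hp, hq]

theorem natDegree_restrictLine_le (a : σ → R) (f : MvPolynomial σ R) :
    (restrictLine a f).natDegree ≤ f.totalDegree :=
  Polynomial.natDegree_le_iff_coeff_eq_zero.2 fun k hk => by
    rw [coeff_restrictLine, homogeneousComponent_eq_zero k f hk, map_zero]

theorem totalDegree_le_of_homogeneousComponent_eq_zero {f : MvPolynomial σ R} {d : ℕ}
    (h : ∀ k, d < k → homogeneousComponent k f = 0) : f.totalDegree ≤ d := by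
  conv_lhs => rw [← sum_homogeneousComponent f]
  refine (totalDegree_finsetSum _ _).trans (Finset.sup_le fun k _ => ?_)
  rcases le_or_gt k d with hk | hk
  · exact (homogeneousComponent_isHomogeneous k f).totalDegree_le.trans hk
  · simp [h k hk]

variable {𝕜 : Type*} [NormedField 𝕜] [LinearOrder 𝕜] [IsStrictOrderedRing 𝕜] [OrderTopology 𝕜]
  [Archimedean 𝕜] {f : MvPolynomial σ 𝕜} {d : ℕ}

theorem totalDegree_le_of_isBigO
    (h : ∀ a : σ → ℕ, (fun n : ℕ => eval (fun i => (a i : 𝕜) * n) f) =O[atTop]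
      fun n : ℕ => (n : 𝕜) ^ d) : f.totalDegree ≤ d := by
  refine totalDegree_le_of_homogeneousComponent_eq_zero fun k hk => ?_
  refine funext_set (fun _ => Set.range ((↑) : ℕ → 𝕜))
    (fun _ => Set.infinite_range_of_injective Nat.cast_injective) fun x hx => ?_
  choose a ha using fun i => hx i (Set.mem_univ i)
  obtain rfl : (fun i => (a i : 𝕜)) = x := _root_.funext ha
  have hdeg : (restrictLine (fun i => (a i : 𝕜)) f).natDegree ≤ d :=
    Polynomial.natDegree_le_of_isBigO (by simpa only [eval_restrictLine] using h a)
  rw [← coeff_restrictLine, Polynomial.coeff_eq_zero_of_natDegree_lt (hdeg.trans_lt hk), map_zero]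

theorem le_totalDegree_of_isBigO
    (h : (fun n : ℕ => (n : 𝕜) ^ d) =O[atTop] fun n : ℕ => eval (fun _ => (n : 𝕜)) f) :
    d ≤ f.totalDegree :=
  (Polynomial.le_natDegree_of_isBigO (P := restrictLine 1 f)
    (by simpa only [eval_restrictLine, Pi.one_apply, one_mul] using h)).trans
    (natDegree_restrictLine_le 1 f)

end MvPolynomial

section UpperBound

variable {m₀ : ℕ} {r0 : Fin m₀ → Fin m₀ → Prop} {S : Finset (Fin m₀)} {m : Fin m₀ → ℕ}

noncomputable def incompOutside (r0 : Fin m₀ → Fin m₀ → Prop) (S : Finset (Fin m₀)) :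
    Finset (Fin m₀) :=
  univ.filter fun i => i ∉ S ∧ ∃ j ∈ S, ¬ r0 i j ∧ ¬ r0 j i

theorem notMem_of_mem_incompOutside {i : Fin m₀} (hi : i ∈ incompOutside r0 S) : i ∉ S :=
  (mem_filter.1 hi).2.1

theorem disjoint_incompOutside (r0 : Fin m₀ → Fin m₀ → Prop) (S : Finset (Fin m₀)) :
    Disjoint (incompOutside r0 S) S :=
  disjoint_left.2 fun _ hi => notMem_of_mem_incompOutside hi

theorem rel_or_rel_of_notMem_incompOutside (hS : IsChain r0 (S : Set (Fin m₀))) {k j : Fin m₀}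
    (hk : k ∉ incompOutside r0 S) (hj : j ∈ S) (hne : k ≠ j) : r0 k j ∨ r0 j k := by
  by_cases hkS : k ∈ S
  · exact hS hkS hj hne
  · simp only [incompOutside, mem_filter, mem_univ, true_and, not_and, not_exists] at hk
    have := hk hkS j
    tauto

theorem LexSumChains.ext {x y : LexSumChains m₀ m} (h₁ : x.1 = y.1) (h₂ : (x.2 : ℕ) = y.2) :
    x = y :=
  Sigma.ext h₁ ((Fin.heq_ext_iff (congrArg m h₁)).2 h₂)

theorem card_lexSumChains : Fintype.card (LexSumChains m₀ m) = ∑ i, m i := by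
  simp

theorem card_lexSumChains_subtype (s : Finset (Fin m₀)) :
    Fintype.card {x : LexSumChains m₀ m // x.1 ∈ s} = ∑ i ∈ s, m i := by
  rw [Fintype.card_congr (Equiv.subtypeSigmaEquiv _ _), Fintype.card_sigma]
  simp only [Fintype.card_fin]
  exact sum_coe_sort s m

theorem lexRel_total_of_notMem_incompOutside (hS : IsChain r0 (S : Set (Fin m₀)))
    {x y : LexSumChains m₀ m} (hx : x.1 ∉ incompOutside r0 S) (hy : y.1 ∉ incompOutside r0 S)
    (hxy : x.1 ∈ S ∨ y.1 ∈ S) : lexRel r0 m x y ∨ lexRel r0 m y x := by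
  by_cases h : x.1 = y.1
  · rcases le_total (x.2 : ℕ) y.2 with h' | h'
    exacts [Or.inl (Or.inl ⟨h, h'⟩), Or.inr (Or.inl ⟨h.symm, h'⟩)]
  rcases hxy with hxS | hyS
  · rcases rel_or_rel_of_notMem_incompOutside hS hy hxS (Ne.symm h) with h' | h'
    exacts [Or.inr (Or.inr ⟨Ne.symm h, h'⟩), Or.inl (Or.inr ⟨h, h'⟩)]
  · rcases rel_or_rel_of_notMem_incompOutside hS hx hyS h with h' | h'
    exacts [Or.inl (Or.inr ⟨h, h'⟩), Or.inr (Or.inr ⟨Ne.symm h, h'⟩)]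

theorem IsLin.eq_of_eqOn (hS : IsChain r0 (S : Set (Fin m₀)))
    {φ ψ : LexSumChains m₀ m ≃ Fin (∑ i, m i)} (hφ : IsLin r0 m φ) (hψ : IsLin r0 m ψ)
    (hT : ∀ x : LexSumChains m₀ m, x.1 ∈ incompOutside r0 S → φ x = ψ x)
    (hD : ∀ x y : LexSumChains m₀ m, x.1 ∉ S ∪ incompOutside r0 S →
      y.1 ∉ S ∪ incompOutside r0 S → φ x < φ y → ψ x < ψ y) :
    φ = ψ := by
  refine Equiv.eq_of_eqOn_compl_of_lt_imp {x | x.1 ∉ incompOutside r0 S}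
    (fun x hx => hT x (by simpa using hx)) fun x hx y hy hlt => ?_
  by_cases hxy : x.1 ∈ S ∨ y.1 ∈ S
  · rcases lexRel_total_of_notMem_incompOutside hS hx hy hxy with h | h
    · exact (hψ x y h).lt_of_ne (ψ.injective.ne (ne_of_apply_ne φ hlt.ne))
    · exact absurd (hφ y x h) (not_le.2 hlt)
  · push Not at hxy
    exact hD x y (by simp_all) (by simp_all) hlt

theorem Lplus_le (hS : IsChain r0 (S : Set (Fin m₀))) (m : Fin m₀ → ℕ) :
    Lplus m₀ r0 m ≤ (∑ i, m i) ^ (∑ i ∈ incompOutside r0 S, m i) *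
      (2 ^ ∑ i ∈ (S ∪ incompOutside r0 S)ᶜ, m i) ^ ∑ i ∈ (S ∪ incompOutside r0 S)ᶜ, m i := by
  set T := incompOutside r0 S
  let D := {x : LexSumChains m₀ m // x.1 ∈ (S ∪ T)ᶜ}
  let enc : {φ // IsLin r0 m φ} →
      ({x : LexSumChains m₀ m // x.1 ∈ T} → Fin (∑ i, m i)) × (D → D → Bool) :=
    fun φ => (fun b => φ.1 b, fun x y => decide (φ.1 x < φ.1 y))
  have henc : Function.Injective enc := by
    rintro ⟨φ, hφ⟩ ⟨ψ, hψ⟩ h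
    simp only [enc, Prod.mk.injEq, funext_iff] at h
    refine Subtype.ext (hφ.eq_of_eqOn hS hψ (fun x hx => h.1 ⟨x, hx⟩) fun x y hx hy hlt => ?_)
    simpa [hlt] using h.2 ⟨x, by simpa using hx⟩ ⟨y, by simpa using hy⟩
  rw [Lplus, Nat.card_eq_fintype_card]
  have := Fintype.card_le_of_injective enc henc
  simp only [D, Fintype.card_prod, Fintype.card_fun, Fintype.card_fin, Fintype.card_bool,
    card_lexSumChains_subtype] at this
  exact this

end UpperBound

section LowerBound

variable {m₀ : ℕ} {r0 : Fin m₀ → Fin m₀ → Prop} {S : Finset (Fin m₀)} {m : Fin m₀ → ℕ}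

noncomputable def linKey (r0 : Fin m₀ → Fin m₀ → Prop) (i : Fin m₀) : ℕ ×ₗ Fin m₀ :=
  toLex ((univ.filter (r0 · i)).card, i)

theorem linKey_injective : Function.Injective (linKey r0) :=
  fun _ _ h => congrArg (fun p => (ofLex p).2) h

theorem linKey_lt_linKey [IsPartialOrder (Fin m₀) r0] {i j : Fin m₀} (h : r0 i j) (hne : i ≠ j) :
    linKey r0 i < linKey r0 j := by
  refine Prod.Lex.toLex_lt_toLex.2 (Or.inl ?_)
  show (univ.filter (r0 · i)).card < (univ.filter (r0 · j)).card
  apply card_lt_card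
  refine (ssubset_iff_of_subset fun k hk => ?_).2 ⟨j, ?_, fun hj => hne ?_⟩
  · simp only [mem_filter, mem_univ, true_and] at hk ⊢
    exact trans_of r0 hk h
  · simpa using refl_of r0 j
  · exact antisymm h (by simpa using hj)

theorem exists_greatest_incomparable [IsPartialOrder (Fin m₀) r0]
    (hS : IsChain r0 (S : Set (Fin m₀))) {i : Fin m₀} (hi : i ∈ incompOutside r0 S) :
    ∃ j ∈ S, (¬ r0 i j ∧ ¬ r0 j i) ∧ ∀ b ∈ S, ¬ r0 i b → ¬ r0 b i → r0 b j := by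
  obtain ⟨j, hjW, hmax⟩ := (S.filter fun j => ¬ r0 i j ∧ ¬ r0 j i).exists_max_image (linKey r0)
    (by simpa [incompOutside, Finset.Nonempty] using (mem_filter.1 hi).2.2)
  rw [mem_filter] at hjW
  refine ⟨j, hjW.1, hjW.2, fun b hb hib hbi => ?_⟩
  rcases eq_or_ne b j with rfl | hbj
  · exact refl_of r0 b
  refine (hS hb hjW.1 hbj).resolve_right fun hjb => ?_
  exact (hmax b (mem_filter.2 ⟨hb, hib, hbi⟩)).not_gt (linKey_lt_linKey hjb hbj.symm)

/-- The chain `i` is merged into the chain `H i`; `rel_map` is what makes the merged order extend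
`lexRel`. -/
structure IsHost (r0 : Fin m₀ → Fin m₀ → Prop) (S : Finset (Fin m₀)) (H : Fin m₀ → Fin m₀) :
    Prop where
  rel_map {i j : Fin m₀} : r0 i j → r0 (H i) (H j)
  mem : ∀ i ∈ incompOutside r0 S, H i ∈ S
  incomp : ∀ i ∈ incompOutside r0 S, ¬ r0 i (H i) ∧ ¬ r0 (H i) i
  apply_of_notMem : ∀ i ∉ incompOutside r0 S, H i = i

theorem exists_isHost [IsPartialOrder (Fin m₀) r0] (hS : IsChain r0 (S : Set (Fin m₀))) :
    ∃ H, IsHost r0 S H := by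
  set T := incompOutside r0 S
  choose! J hJS hJinc hJmax using fun i (hi : i ∈ T) => exists_greatest_incomparable hS hi
  have comparable : ∀ k ∉ T, ∀ j ∈ S, r0 k j ∨ r0 j k := fun k hk j hj => by
    rcases eq_or_ne k j with rfl | hne
    exacts [Or.inl (refl_of r0 k), rel_or_rel_of_notMem_incompOutside hS hk hj hne]
  have hJT : ∀ i ∈ T, J i ∉ T := fun i hi h => notMem_of_mem_incompOutside h (hJS i hi)
  refine ⟨fun i => if i ∈ T then J i else i, ⟨fun {i j} hij => ?_,
    fun i hi => by rw [if_pos hi]; exact hJS i hi, fun i hi => by rw [if_pos hi]; exact hJinc i hi,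
    fun i hi => if_neg hi⟩⟩
  by_cases hi : i ∈ T <;> by_cases hj : j ∈ T <;> simp only [hi, hj, if_true, if_false]
  · by_cases h₁ : r0 (J i) j
    · refine (comparable _ (hJT i hi) _ (hJS j hj)).resolve_right fun h => ?_
      exact (hJinc j hj).2 (trans_of r0 h h₁)
    by_cases h₂ : r0 j (J i)
    · exact absurd (trans_of r0 hij h₂) (hJinc i hi).1
    · exact hJmax j hj (J i) (hJS i hi) h₂ h₁
  · exact (comparable j hj _ (hJS i hi)).resolve_left fun h => (hJinc i hi).1 (trans_of r0 hij h)
  · exact (comparable i hi _ (hJS j hj)).resolve_right fun h => (hJinc j hj).2 (trans_of r0 h hij)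
  · exact hij

theorem IsHost.mem_of_apply_eq {H : Fin m₀ → Fin m₀} (hH : IsHost r0 S H) {i j : Fin m₀}
    (hij : r0 i j) (hne : i ≠ j) (heq : H i = H j) :
    i ∈ incompOutside r0 S ∧ j ∈ incompOutside r0 S := by
  by_cases hi : i ∈ incompOutside r0 S <;> by_cases hj : j ∈ incompOutside r0 S
  · exact ⟨hi, hj⟩
  · rw [hH.apply_of_notMem j hj] at heq
    exact absurd (heq ▸ hij) (hH.incomp i hi).1
  · rw [hH.apply_of_notMem i hi] at heq
    exact absurd (heq ▸ hij) (hH.incomp j hj).2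
  · rw [hH.apply_of_notMem i hi, hH.apply_of_notMem j hj] at heq
    exact absurd heq hne

variable (r0 S m)

abbrev IncompPart : Type := {x : LexSumChains m₀ m // x.1 ∈ incompOutside r0 S}

noncomputable def incompRank : IncompPart r0 S m ≃ Fin (∑ i ∈ incompOutside r0 S, m i) :=
  rankEquiv (fun b => toLex (linKey r0 b.1.1, (b.1.2 : ℕ)))
    (fun _ _ h => Subtype.ext (LexSumChains.ext
      (linKey_injective (congrArg (fun p => (ofLex p).1) h)) (congrArg (fun p => (ofLex p).2) h)))
    (card_lexSumChains_subtype _)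

variable {r0 S m} {w : ℕ}

theorem incompRank_lt_incompRank {b b' : IncompPart r0 S m}
    (h : toLex (linKey r0 b.1.1, (b.1.2 : ℕ)) < toLex (linKey r0 b'.1.1, (b'.1.2 : ℕ))) :
    incompRank r0 S m b < incompRank r0 S m b' :=
  (rankEquiv_lt_rankEquiv_iff _ _).2 h

noncomputable def slot (c : IncompPart r0 S m → Fin w) (b : IncompPart r0 S m) : ℕ :=
  incompRank r0 S m b * w + c b

theorem slot_lt_slot (c : IncompPart r0 S m → Fin w) {b b' : IncompPart r0 S m}
    (h : incompRank r0 S m b < incompRank r0 S m b') : slot c b < slot c b' := by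
  have hb : (c b : ℕ) < w := (c b).2
  have h' : (incompRank r0 S m b : ℕ) + 1 ≤ incompRank r0 S m b' := h
  unfold slot
  nlinarith

theorem slot_injective (c : IncompPart r0 S m → Fin w) : Function.Injective (slot c) := by
  intro b b' h
  rcases lt_trichotomy (incompRank r0 S m b) (incompRank r0 S m b') with hlt | heq | hgt
  · exact absurd h (slot_lt_slot c hlt).ne
  · exact (incompRank r0 S m).injective heq
  · exact absurd h (slot_lt_slot c hgt).ne'

theorem slot_lt {N : ℕ} (hw : (∑ i ∈ incompOutside r0 S, m i) * w ≤ N)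
    (c : IncompPart r0 S m → Fin w) (b : IncompPart r0 S m) : slot c b < N := by
  have hb : (c b : ℕ) < w := (c b).2
  have h' : (incompRank r0 S m b : ℕ) + 1 ≤ ∑ i ∈ incompOutside r0 S, m i :=
    (incompRank r0 S m b).2
  unfold slot
  nlinarith

variable (H : Fin m₀ → Fin m₀)

/-- Elements of chains fixed by `H` sit at odd positions and the merged elements at even ones, so
the key is injective and `c` decides where each merged element falls. -/
noncomputable def insertionKey (c : IncompPart r0 S m → Fin w) (x : LexSumChains m₀ m) :
    (ℕ ×ₗ Fin m₀) ×ₗ ℕ :=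
  toLex (linKey r0 (H x.1),
    if hx : x.1 ∈ incompOutside r0 S then 2 * slot c ⟨x, hx⟩ else 2 * x.2 + 1)

variable {H}

theorem insertionKey_injective (hH : IsHost r0 S H) (c : IncompPart r0 S m → Fin w) :
    Function.Injective (insertionKey H c) := by
  intro x y h
  simp only [insertionKey, toLex_inj, Prod.mk.injEq] at h
  obtain ⟨hH₁, h₂⟩ := h
  by_cases hx : x.1 ∈ incompOutside r0 S <;> by_cases hy : y.1 ∈ incompOutside r0 S <;>
    simp only [hx, hy, dif_pos, dif_neg, not_false_eq_true] at h₂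
  · have : slot c ⟨x, hx⟩ = slot c ⟨y, hy⟩ := by omega
    exact congrArg Subtype.val (slot_injective c this)
  · omega
  · omega
  · rw [hH.apply_of_notMem _ hx, hH.apply_of_notMem _ hy] at hH₁
    exact LexSumChains.ext (linKey_injective hH₁) (by omega)

theorem insertionKey_le_of_lexRel [IsPartialOrder (Fin m₀) r0] (hH : IsHost r0 S H)
    (c : IncompPart r0 S m → Fin w) {x y : LexSumChains m₀ m} (hxy : lexRel r0 m x y) :
    insertionKey H c x ≤ insertionKey H c y := by
  rcases eq_or_ne x y with rfl | hne
  · exact le_rfl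
  have hr : r0 x.1 y.1 := hxy.elim (fun h => h.1 ▸ refl_of r0 x.1) (·.2)
  rcases eq_or_ne (H x.1) (H y.1) with hHxy | hHxy
  swap
  · exact (Prod.Lex.toLex_lt_toLex.2 (Or.inl (linKey_lt_linKey (hH.rel_map hr) hHxy))).le
  refine Prod.Lex.toLex_le_toLex.2 (Or.inr ⟨congrArg (linKey r0) hHxy, ?_⟩)
  rcases hxy with ⟨h₁, h₂⟩ | ⟨h₁, h₂⟩
  · have hlt : (x.2 : ℕ) < y.2 := h₂.lt_of_ne fun h => hne (LexSumChains.ext h₁ h)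
    by_cases hx : x.1 ∈ incompOutside r0 S
    · have hy : y.1 ∈ incompOutside r0 S := h₁ ▸ hx
      have := slot_lt_slot c (incompRank_lt_incompRank (b := ⟨x, hx⟩) (b' := ⟨y, hy⟩)
        (Prod.Lex.toLex_lt_toLex.2 (Or.inr ⟨congrArg (linKey r0) h₁, hlt⟩)))
      simp only [dif_pos hx, dif_pos hy]
      omega
    · have hy : y.1 ∉ incompOutside r0 S := h₁ ▸ hx
      simp only [dif_neg hx, dif_neg hy]
      omega
  · obtain ⟨hx, hy⟩ := hH.mem_of_apply_eq h₂ h₁ hHxy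
    have := slot_lt_slot c (incompRank_lt_incompRank (b := ⟨x, hx⟩) (b' := ⟨y, hy⟩)
      (Prod.Lex.toLex_lt_toLex.2 (Or.inl (linKey_lt_linKey h₂ h₁))))
    simp only [dif_pos hx, dif_pos hy]
    omega

noncomputable def insertionLin (hH : IsHost r0 S H) (c : IncompPart r0 S m → Fin w) :
    LexSumChains m₀ m ≃ Fin (∑ i, m i) :=
  rankEquiv (insertionKey H c) (insertionKey_injective hH c) card_lexSumChains

theorem isLin_insertionLin [IsPartialOrder (Fin m₀) r0] (hH : IsHost r0 S H)
    (c : IncompPart r0 S m → Fin w) : IsLin r0 m (insertionLin hH c) :=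
  fun _ _ h => (rankEquiv_le_rankEquiv_iff _ _).2 (insertionKey_le_of_lexRel hH c h)

theorem insertionLin_injective {N : ℕ} (hH : IsHost r0 S H) (hmS : ∀ i ∈ S, m i = N)
    (hw : (∑ i ∈ incompOutside r0 S, m i) * w ≤ N) :
    Function.Injective (insertionLin (m := m) (w := w) hH) := by
  intro c c' h
  by_contra hne
  obtain ⟨b, hb⟩ := Function.ne_iff.1 hne
  wlog hlt : c b < c' b generalizing c c'
  · exact this h.symm (Ne.symm hne) (Ne.symm hb) ((not_lt.1 hlt).lt_of_ne (Ne.symm hb))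
  have hHb : H b.1.1 ∈ S := hH.mem _ b.2
  -- an element of the host chain of `b` lying between the two positions of `b`
  let x : LexSumChains m₀ m := ⟨H b.1.1, ⟨slot c b, (hmS _ hHb).symm ▸ slot_lt hw c b⟩⟩
  have hx : x.1 ∉ incompOutside r0 S := fun hx => notMem_of_mem_incompOutside hx hHb
  have hHx : H x.1 = H b.1.1 := hH.apply_of_notMem _ hx
  have hx₂ : (x.2 : ℕ) = slot c b := rfl
  have hslot : slot c b < slot c' b := by
    unfold slot
    have : (c b : ℕ) < c' b := hlt
    omega
  have h₁ : insertionLin hH c b.1 < insertionLin hH c x := by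
    refine (rankEquiv_lt_rankEquiv_iff _ _).2 (Prod.Lex.toLex_lt_toLex.2 (Or.inr ⟨?_, ?_⟩))
    · rw [hHx]
    · simp only [dif_pos b.2, dif_neg hx, Subtype.coe_eta]
      omega
  have h₂ : insertionLin hH c' x < insertionLin hH c' b.1 := by
    refine (rankEquiv_lt_rankEquiv_iff _ _).2 (Prod.Lex.toLex_lt_toLex.2 (Or.inr ⟨?_, ?_⟩))
    · rw [hHx]
    · simp only [dif_pos b.2, dif_neg hx, Subtype.coe_eta]
      omega
  rw [h] at h₁
  exact h₁.not_gt h₂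

theorem pow_le_Lplus [IsPartialOrder (Fin m₀) r0] (hS : IsChain r0 (S : Set (Fin m₀))) {N : ℕ}
    (hmS : ∀ i ∈ S, m i = N) (hw : (∑ i ∈ incompOutside r0 S, m i) * w ≤ N) :
    w ^ (∑ i ∈ incompOutside r0 S, m i) ≤ Lplus m₀ r0 m := by
  obtain ⟨H, hH⟩ := exists_isHost hS
  calc w ^ (∑ i ∈ incompOutside r0 S, m i) = Fintype.card (IncompPart r0 S m → Fin w) := by
        simp [card_lexSumChains_subtype]
    _ ≤ Fintype.card {φ // IsLin r0 m φ} :=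
        Fintype.card_le_of_injective (fun c => ⟨insertionLin hH c, isLin_insertionLin hH c⟩)
          fun _ _ h => insertionLin_injective hH hmS hw (congrArg Subtype.val h)
    _ = Lplus m₀ r0 m := Nat.card_eq_fintype_card.symm

end LowerBound

section Growth

variable {m₀ : ℕ} {r0 : Fin m₀ → Fin m₀ → Prop} {S : Finset (Fin m₀)}

def replaceOn (S : Finset (Fin m₀)) (v : S → ℕ) (m : Fin m₀ → ℕ) : Fin m₀ → ℕ :=
  fun i => if h : i ∈ S then v ⟨i, h⟩ else m i

theorem sum_replaceOn_of_disjoint {s : Finset (Fin m₀)} (hs : Disjoint s S) (v : S → ℕ)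
    (m : Fin m₀ → ℕ) : ∑ i ∈ s, replaceOn S v m i = ∑ i ∈ s, m i :=
  sum_congr rfl fun _ hi => dif_neg (disjoint_left.1 hs hi)

theorem sum_replaceOn_le (v : S → ℕ) (m : Fin m₀ → ℕ) :
    ∑ i, replaceOn S v m i ≤ ∑ j, v j + ∑ i, m i := by
  rw [← sum_add_sum_compl S (replaceOn S v m), sum_replaceOn_of_disjoint disjoint_compl_left,
    ← sum_coe_sort S (replaceOn S v m)]
  simp only [replaceOn, coe_mem, dif_pos, Subtype.coe_eta]
  gcongr
  exact subset_univ _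

theorem Lplus_replaceOn_isBigO (hS : IsChain r0 (S : Set (Fin m₀))) (m : Fin m₀ → ℕ)
    (a : S → ℕ) :
    (fun n : ℕ => (Lplus m₀ r0 (replaceOn S (fun j => a j * n) m) : ℚ)) =O[atTop]
      fun n : ℕ => (n : ℚ) ^ ∑ i ∈ incompOutside r0 S, m i := by
  set d := ∑ i ∈ incompOutside r0 S, m i
  set c := ∑ i ∈ (S ∪ incompOutside r0 S)ᶜ, m i
  set A := ∑ j, a j + ∑ i, m i
  refine IsBigO.of_bound ((A ^ d * (2 ^ c) ^ c : ℕ) : ℝ) ?_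
  filter_upwards [eventually_ge_atTop 1] with n hn
  have hsum : ∑ i, replaceOn S (fun j => a j * n) m i ≤ A * n :=
    calc _ ≤ ∑ j, a j * n + ∑ i, m i := sum_replaceOn_le _ _
      _ ≤ A * n := by
        rw [add_mul, ← sum_mul]
        gcongr
        exact Nat.le_mul_of_pos_right _ hn
  have hL := Lplus_le hS (replaceOn S (fun j => a j * n) m)
  rw [sum_replaceOn_of_disjoint (disjoint_incompOutside r0 S),
    sum_replaceOn_of_disjoint (disjoint_compl_left.mono_right subset_union_left)] at hL
  have hL' : Lplus m₀ r0 (replaceOn S (fun j => a j * n) m) ≤ A ^ d * (2 ^ c) ^ c * n ^ d :=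
    calc _ ≤ _ := hL
      _ ≤ (A * n) ^ d * (2 ^ c) ^ c := by gcongr
      _ = _ := by rw [mul_pow, mul_right_comm]
  simp only [Rat.norm_natCast, norm_pow]
  exact_mod_cast hL'

theorem pow_le_mul_pow_div {n d : ℕ} (hn : d ≤ n) : n ^ d ≤ (2 * d) ^ d * (n / d) ^ d := by
  rw [← mul_pow]
  rcases d.eq_zero_or_pos with rfl | hd
  · simp
  have h₁ := Nat.lt_mul_div_succ n hd
  have h₂ : d ≤ d * (n / d) := Nat.le_mul_of_pos_right d (Nat.div_pos hn hd)
  gcongr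
  nlinarith

theorem pow_isBigO_Lplus_replaceOn [IsPartialOrder (Fin m₀) r0]
    (hS : IsChain r0 (S : Set (Fin m₀))) (m : Fin m₀ → ℕ) :
    (fun n : ℕ => (n : ℚ) ^ ∑ i ∈ incompOutside r0 S, m i) =O[atTop]
      fun n : ℕ => (Lplus m₀ r0 (replaceOn S (fun _ => n) m) : ℚ) := by
  set d := ∑ i ∈ incompOutside r0 S, m i
  refine IsBigO.of_bound (((2 * d) ^ d : ℕ) : ℝ) ?_
  filter_upwards [eventually_ge_atTop d] with n hn
  have hsum := sum_replaceOn_of_disjoint (disjoint_incompOutside r0 S) (fun _ => n) m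
  have hL := pow_le_Lplus hS (N := n) (w := n / d) (m := replaceOn S (fun _ => n) m)
    (fun i hi => dif_pos hi) (by rw [hsum, mul_comm]; exact Nat.div_mul_le_self n d)
  rw [hsum] at hL
  simp only [Rat.norm_natCast, norm_pow]
  exact_mod_cast (pow_le_mul_pow_div hn).trans (Nat.mul_le_mul_left _ hL)

end Growth

/-- Corollary on the total degree. If `S` is a chain in `P₀`, the values `mᵢ`
with `xᵢ ∉ S` are fixed, and `f` is the polynomial in the variables `mᵢ` (for `xᵢ ∈ S`)
giving `L₊(P₀; m₁,…,m_{m₀})` as a function of those variables, then the total degree of `f`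
equals the sum of the `mᵢ` over those `xᵢ ∉ S` that are incomparable in `P₀` with at least one
element of `S`. -/
theorem lexSum_linearizationCount_polynomial_totalDegree (m₀ : ℕ)
    (r0 : Fin m₀ → Fin m₀ → Prop) (hr0 : IsPartialOrder (Fin m₀) r0)
    (S : Finset (Fin m₀)) (hS : IsChain r0 (↑S : Set (Fin m₀))) (m : Fin m₀ → ℕ)
    (f : MvPolynomial {i : Fin m₀ // i ∈ S} ℚ)
    (hf : ∀ v : {i : Fin m₀ // i ∈ S} → ℕ,
        (Lplus m₀ r0 (fun i => if h : i ∈ S then v ⟨i, h⟩ else m i) : ℚ) =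
          MvPolynomial.eval (fun j => (v j : ℚ)) f) :
    f.totalDegree =
      ∑ i ∈ Finset.univ.filter
          (fun i : Fin m₀ => i ∉ S ∧ ∃ j ∈ S, ¬ r0 i j ∧ ¬ r0 j i), m i := by
  have := hr0
  have hf' : ∀ v, MvPolynomial.eval (fun j => (v j : ℚ)) f = Lplus m₀ r0 (replaceOn S v m) :=
    fun v => (hf v).symm
  refine le_antisymm (MvPolynomial.totalDegree_le_of_isBigO fun a => ?_)
    (MvPolynomial.le_totalDegree_of_isBigO ?_)
  · simpa only [← hf', Nat.cast_mul, incompOutside] using Lplus_replaceOn_isBigO hS m a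
  · simpa only [← hf', incompOutside] using pow_isBigO_Lplus_replaceOn hS m
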